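/- For the three-parameter fundamental diagram Q with α, λ > 0 and p ∈ (0,1), the derivative Q'(ρ) has exactly one zero ρ_c in (0, ρ_m), since Q'(0) > 0, Q'(ρ_m) < 0, and Q' is strictly decreasing. -/

import Mathlib

/-!
Writing `u = ρ/ρm - p`, the derivative is `Q'(ρ) = (α/ρm) (b - a - λ² u / √(1 + λ²u²))`, and
`u ↦ u / √(1 + λ²u²)` is strictly increasing, so `Q'` is strictly decreasing. At the endpoints
the square root equals `a` resp. `b`, and both signs reduce to `1 - λ²p(1-p) < ab`, which holds
because `(ab)² - (1 - λ²p(1-p))² = λ²`. The intermediate value theorem gives the zero.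
-/

open Real Set

theorem existsUnique_zero_of_strictAntiOn {f : ℝ → ℝ} {x y : ℝ} (hxy : x ≤ y)
    (hf : ContinuousOn f (Icc x y)) (hanti : StrictAntiOn f (Icc x y))
    (hx : 0 < f x) (hy : f y < 0) :
    ∃! c, c ∈ Ioo x y ∧ f c = 0 := by
  obtain ⟨c, hc, hfc⟩ := intermediate_value_Ioo' hxy hf ⟨hy, hx⟩
  refine ⟨c, ⟨hc, hfc⟩, fun d ⟨hd, hfd⟩ => ?_⟩
  exact hanti.injOn (Ioo_subset_Icc_self hd) (Ioo_subset_Icc_self hc) (hfd.trans hfc.symm)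

theorem strictMono_div_sqrt_one_add_sq (lam : ℝ) :
    StrictMono fun s : ℝ => s / √(1 + lam ^ 2 * s ^ 2) := by
  intro s t hst
  have hA : 0 < √(1 + lam ^ 2 * s ^ 2) := sqrt_pos.mpr (by positivity)
  have hB : 0 < √(1 + lam ^ 2 * t ^ 2) := sqrt_pos.mpr (by positivity)
  have hA2 : √(1 + lam ^ 2 * s ^ 2) ^ 2 = 1 + lam ^ 2 * s ^ 2 := sq_sqrt (by positivity)
  have hB2 : √(1 + lam ^ 2 * t ^ 2) ^ 2 = 1 + lam ^ 2 * t ^ 2 := sq_sqrt (by positivity)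
  set A := √(1 + lam ^ 2 * s ^ 2)
  set B := √(1 + lam ^ 2 * t ^ 2)
  -- `(tA)² - (sB)² = t² - s²`, so squaring settles the cases where `s` and `t` have equal signs.
  show s / A < t / B
  rw [div_lt_div_iff₀ hA hB]
  rcases le_or_gt 0 s with hs | hs
  · have ht : 0 < t := hs.trans_lt hst
    have hsq : (s * B) ^ 2 < (t * A) ^ 2 := by nlinarith
    nlinarith [mul_nonneg hs hB.le, mul_pos ht hA]
  rcases le_or_gt t 0 with ht | ht
  · have hsq : (t * A) ^ 2 < (s * B) ^ 2 := by nlinarith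
    nlinarith [mul_neg_of_neg_of_pos hs hB, mul_nonpos_of_nonpos_of_nonneg ht hA.le]
  · exact (mul_neg_of_neg_of_pos hs hB).trans (mul_pos ht hA)

theorem one_sub_lt_sqrt_mul_sqrt {lam : ℝ} (hlam : lam ≠ 0) (p : ℝ) :
    1 - lam ^ 2 * p * (1 - p) < √(1 + (lam * p) ^ 2) * √(1 + (lam * (1 - p)) ^ 2) := by
  rw [← sqrt_mul (by positivity)]
  apply lt_sqrt_of_sq_lt
  have : 0 < lam ^ 2 := by positivity
  nlinarith

section Flux

variable (a b α lam p ρm : ℝ)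

/-- The three-parameter fundamental diagram `Q`. -/
noncomputable def flux (ρ : ℝ) : ℝ :=
  α * (a + (b - a) * ρ / ρm - √(1 + lam ^ 2 * (ρ / ρm - p) ^ 2))

noncomputable def fluxDeriv (ρ : ℝ) : ℝ :=
  α / ρm * (b - a - lam ^ 2 * ((ρ / ρm - p) / √(1 + lam ^ 2 * (ρ / ρm - p) ^ 2)))

variable {ρm}

theorem hasDerivAt_flux (hρm : ρm ≠ 0) (x : ℝ) :
    HasDerivAt (flux a b α lam p ρm) (fluxDeriv a b α lam p ρm x) x := by
  have hpos : 0 < 1 + lam ^ 2 * (x / ρm - p) ^ 2 := by positivity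
  have hu : HasDerivAt (fun ρ : ℝ => ρ / ρm - p) (1 / ρm) x := by
    simpa using ((hasDerivAt_id x).div_const ρm).sub_const p
  have hsq : HasDerivAt (fun ρ : ℝ => 1 + lam ^ 2 * (ρ / ρm - p) ^ 2)
      (lam ^ 2 * ((2 : ℕ) * (x / ρm - p) ^ 1 * (1 / ρm))) x :=
    ((hu.pow 2).const_mul (lam ^ 2)).const_add 1
  have hroot := hsq.sqrt hpos.ne'
  have hlin : HasDerivAt (fun ρ : ℝ => a + (b - a) * ρ / ρm) ((b - a) * 1 / ρm) x :=
    (((hasDerivAt_id x).const_mul (b - a)).div_const ρm).const_add a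
  refine ((hlin.sub hroot).const_mul α).congr_deriv ?_
  have : √(1 + lam ^ 2 * (x / ρm - p) ^ 2) ≠ 0 := (sqrt_pos.mpr hpos).ne'
  simp only [fluxDeriv]
  field_simp
  ring

theorem deriv_flux (hρm : ρm ≠ 0) : deriv (flux a b α lam p ρm) = fluxDeriv a b α lam p ρm :=
  funext fun x => (hasDerivAt_flux a b α lam p hρm x).deriv

theorem continuous_fluxDeriv : Continuous (fluxDeriv a b α lam p ρm) := by
  unfold fluxDeriv
  refine continuous_const.mul (continuous_const.sub (continuous_const.mul ?_))
  exact Continuous.div (by fun_prop) (by fun_prop) fun x => (sqrt_pos.mpr (by positivity)).ne'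

variable {α lam}

theorem strictAnti_fluxDeriv (hα : 0 < α) (hlam : lam ≠ 0) (hρm : 0 < ρm) :
    StrictAnti (fluxDeriv a b α lam p ρm) := by
  intro x y hxy
  have hu : x / ρm - p < y / ρm - p := by
    linarith [div_lt_div_of_pos_right hxy hρm]
  have hφ := strictMono_div_sqrt_one_add_sq lam hu
  unfold fluxDeriv
  gcongr

variable {a b p}

theorem fluxDeriv_zero_pos (hα : 0 < α) (hlam : lam ≠ 0) (hρm : 0 < ρm)
    (ha : a = √(1 + (lam * p) ^ 2)) (hb : b = √(1 + (lam * (1 - p)) ^ 2)) :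
    0 < fluxDeriv a b α lam p ρm 0 := by
  have hroot : √(1 + lam ^ 2 * (0 / ρm - p) ^ 2) = a := by
    rw [ha]; congr 1; ring
  have ha0 : 0 < a := ha ▸ sqrt_pos.mpr (by positivity)
  have ha2 : a ^ 2 = 1 + (lam * p) ^ 2 := ha ▸ sq_sqrt (by positivity)
  have hab := one_sub_lt_sqrt_mul_sqrt hlam p
  rw [← ha, ← hb] at hab
  unfold fluxDeriv
  rw [hroot]
  refine mul_pos (div_pos hα hρm) ?_
  rw [zero_div, sub_pos, mul_div_assoc', div_lt_iff₀ ha0]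
  nlinarith

theorem fluxDeriv_self_neg (hα : 0 < α) (hlam : lam ≠ 0) (hρm : 0 < ρm)
    (ha : a = √(1 + (lam * p) ^ 2)) (hb : b = √(1 + (lam * (1 - p)) ^ 2)) :
    fluxDeriv a b α lam p ρm ρm < 0 := by
  have hroot : √(1 + lam ^ 2 * (ρm / ρm - p) ^ 2) = b := by
    rw [hb, div_self hρm.ne']; congr 1; ring
  have hb0 : 0 < b := hb ▸ sqrt_pos.mpr (by positivity)
  have hb2 : b ^ 2 = 1 + (lam * (1 - p)) ^ 2 := hb ▸ sq_sqrt (by positivity)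
  have hab := one_sub_lt_sqrt_mul_sqrt hlam p
  rw [← ha, ← hb] at hab
  unfold fluxDeriv
  rw [hroot]
  refine mul_neg_of_pos_of_neg (div_pos hα hρm) ?_
  rw [div_self hρm.ne', sub_neg, mul_div_assoc', lt_div_iff₀ hb0]
  nlinarith

end Flux

theorem three_param_FD_unique_critical_density_general
    (a b α lam p ρm : ℝ) (hα : 0 < α) (hlam : 0 < lam)
    (hρm : 0 < ρm)
    (ha : a = Real.sqrt (1 + (lam * p) ^ 2))
    (hb : b = Real.sqrt (1 + (lam * (1 - p)) ^ 2)) :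
    (0 < deriv (fun ρ : ℝ => α * (a + (b - a) * ρ / ρm
        - Real.sqrt (1 + lam ^ 2 * (ρ / ρm - p) ^ 2))) 0) ∧
    (deriv (fun ρ : ℝ => α * (a + (b - a) * ρ / ρm
        - Real.sqrt (1 + lam ^ 2 * (ρ / ρm - p) ^ 2))) ρm < 0) ∧
    StrictAntiOn (deriv (fun ρ : ℝ => α * (a + (b - a) * ρ / ρm
        - Real.sqrt (1 + lam ^ 2 * (ρ / ρm - p) ^ 2)))) (Set.Icc 0 ρm) ∧
    (∃! ρc : ℝ, ρc ∈ Set.Ioo 0 ρm ∧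
      deriv (fun ρ : ℝ => α * (a + (b - a) * ρ / ρm
        - Real.sqrt (1 + lam ^ 2 * (ρ / ρm - p) ^ 2))) ρc = 0) := by
  change 0 < deriv (flux a b α lam p ρm) 0 ∧ deriv (flux a b α lam p ρm) ρm < 0 ∧
    StrictAntiOn (deriv (flux a b α lam p ρm)) (Icc 0 ρm) ∧
    ∃! ρc, ρc ∈ Ioo 0 ρm ∧ deriv (flux a b α lam p ρm) ρc = 0
  rw [deriv_flux a b α lam p hρm.ne']
  have hpos := fluxDeriv_zero_pos hα hlam.ne' hρm ha hb
  have hneg := fluxDeriv_self_neg hα hlam.ne' hρm ha hb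
  have hanti := (strictAnti_fluxDeriv a b p hα hlam.ne' hρm).strictAntiOn (Icc 0 ρm)
  exact ⟨hpos, hneg, hanti, existsUnique_zero_of_strictAntiOn hρm.le
    (continuous_fluxDeriv a b α lam p).continuousOn hanti hpos hneg⟩

/-- For the three-parameter fundamental diagram Q, the derivative Q' is strictly
    decreasing, positive at 0 and negative at ρ_m, hence has exactly one zero
    ρ_c in (0, ρ_m). -/
theorem three_param_FD_unique_critical_density
    (a b α lam p ρm : ℝ) (hα : 0 < α) (hlam : 0 < lam)
    (hp1 : 0 < p) (hp2 : p < 1) (hρm : 0 < ρm)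
    (ha : a = Real.sqrt (1 + (lam * p) ^ 2))
    (hb : b = Real.sqrt (1 + (lam * (1 - p)) ^ 2)) :
    (0 < deriv (fun ρ : ℝ => α * (a + (b - a) * ρ / ρm
        - Real.sqrt (1 + lam ^ 2 * (ρ / ρm - p) ^ 2))) 0) ∧
    (deriv (fun ρ : ℝ => α * (a + (b - a) * ρ / ρm
        - Real.sqrt (1 + lam ^ 2 * (ρ / ρm - p) ^ 2))) ρm < 0) ∧
    StrictAntiOn (deriv (fun ρ : ℝ => α * (a + (b - a) * ρ / ρm
        - Real.sqrt (1 + lam ^ 2 * (ρ / ρm - p) ^ 2)))) (Set.Icc 0 ρm) ∧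
    (∃! ρc : ℝ, ρc ∈ Set.Ioo 0 ρm ∧
      deriv (fun ρ : ℝ => α * (a + (b - a) * ρ / ρm
        - Real.sqrt (1 + lam ^ 2 * (ρ / ρm - p) ^ 2))) ρc = 0) :=
  three_param_FD_unique_critical_density_general a b α lam p ρm hα hlam hρm ha hb
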